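/- For any HyperLMNtal graph G and hyperlink X not occurring free in G, the graph νX.G is structurally congruent to G. -/

import Mathlib

/-- Atom names: either the fusion atom `⋈` or an ordinary constructor name. -/
inductive AName where
  | fuse
  | ctor (s : String)
deriving DecidableEq

/-- HyperLMNtal graphs: `0`, atoms `p(X̄)`, molecules `(G,G)`, hyperlink creation `νX.G`. -/
inductive HGraph where
  | zero
  | atom (p : AName) (xs : List ℕ)
  | mol (g₁ g₂ : HGraph)
  | nu (x : ℕ) (g : HGraph)
deriving DecidableEq

namespace HGraph

/-- The fusion atom `X ⋈ Y`. -/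
def fuseG (x y : ℕ) : HGraph := .atom .fuse [x, y]

/-- Free link names. -/
def fn : HGraph → Finset ℕ
  | .zero => ∅
  | .atom _ xs => xs.toFinset
  | .mol g₁ g₂ => g₁.fn ∪ g₂.fn
  | .nu x g => g.fn.erase x

/-- Capture-avoiding link substitution: `LSubst g x y g'` means `g⟨y/x⟩ = g'`
(all free occurrences of `x` replaced by `y`). -/
inductive LSubst : HGraph → ℕ → ℕ → HGraph → Prop where
  | zero : LSubst .zero x y .zero
  | atom : LSubst (.atom p xs) x y (.atom p (xs.map fun z => if z = x then y else z))
  | mol : LSubst g₁ x y g₁' → LSubst g₂ x y g₂' →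
      LSubst (.mol g₁ g₂) x y (.mol g₁' g₂')
  | nuEq : LSubst (.nu x g) x y (.nu x g)
  | nuNe : z ≠ x → z ≠ y → LSubst g x y g' →
      LSubst (.nu z g) x y (.nu z g')
  | nuCap : y ≠ x → w ∉ g.fn → w ≠ y →
      LSubst g y w g₁ → LSubst g₁ x y g₂ →
      LSubst (.nu y g) x y (.nu w g₂)

/-- Structural congruence `≡` generated by (E1)–(E10). -/
inductive Cong : HGraph → HGraph → Prop where
  | refl : Cong g g
  | symm : Cong g₁ g₂ → Cong g₂ g₁
  | trans : Cong g₁ g₂ → Cong g₂ g₃ → Cong g₁ g₃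
  | e1 : Cong (.mol .zero g) g
  | e2 : Cong (.mol g₁ g₂) (.mol g₂ g₁)
  | e3 : Cong (.mol g₁ (.mol g₂ g₃)) (.mol (.mol g₁ g₂) g₃)
  | e4 : Cong g₁ g₂ → Cong (.mol g₁ g₃) (.mol g₂ g₃)
  | e5 : Cong g₁ g₂ → Cong (.nu x g₁) (.nu x g₂)
  | e6 : x ∈ g.fn ∨ y ∈ g.fn → LSubst g x y g' →
      Cong (.nu x (.mol (fuseG x y) g)) (.nu x g')
  | e7 : Cong (.nu x (.nu y (fuseG x y))) .zero
  | e8 : Cong (.nu x .zero) .zero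
  | e9 : Cong (.nu x (.nu y g)) (.nu y (.nu x g))
  | e10 : x ∉ g₂.fn → Cong (.nu x (.mol g₁ g₂)) (.mol (.nu x g₁) g₂)

end HGraph

/-- A rewrite rule `lhs ⊸ rhs`. -/
structure GRule where
  lhs : HGraph
  rhs : HGraph

/-- The one-step reduction relation `⇝_P` (rules (R1)–(R4)). -/
inductive Red (P : Set GRule) : HGraph → HGraph → Prop where
  | r1 : Red P g₁ g₂ → Red P (.mol g₁ g₃) (.mol g₂ g₃)
  | r2 : Red P g₁ g₂ → Red P (.nu x g₁) (.nu x g₂)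
  | r3 : HGraph.Cong g₁ g₂ → Red P g₂ g₃ → HGraph.Cong g₃ g₄ → Red P g₁ g₄
  | r4 : r ∈ P → Red P r.lhs r.rhs

instance : Trans HGraph.Cong HGraph.Cong HGraph.Cong := ⟨.trans⟩

/-- for any graph `G` and hyperlink `X` not free in `G`, `νX.G ≡ G`. -/
theorem nu_elim_of_not_free (g : HGraph) (x : ℕ) (h : x ∉ g.fn) :
    HGraph.Cong (.nu x g) g :=
  calc HGraph.Cong (.nu x g) (.nu x (.mol .zero g)) := .e5 (.symm .e1)
    HGraph.Cong _ (.mol (.nu x .zero) g) := .e10 h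
    HGraph.Cong _ (.mol .zero g) := .e4 .e8
    HGraph.Cong _ g := .e1
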